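/- arXiv:2602.12494 — 2 statements merged into one kernel-verified Lean document; each statement's English description precedes it below -/
import Mathlib

section
/- In tCH2, if g1 lies in the kernel of the ring homomorphism L: tCH2 -> CH2 (L(th_i) = sgn(i+1)*h_{tau(i)}), then for every g2 in tCH2, g1 * g2 = 0. -/
def tau (i : ℤ) : ℤ := |i + 1| - 1

/-- Basis element `th_i` of the free ℤ-module `tCH2 = ℤ →₀ ℤ`. -/
noncomputable def th (i : ℤ) : ℤ →₀ ℤ := Finsupp.single i 1

/-- Product of basis elements of `tCH2`:
`th_{-1} th_j = 0`; `th_i th_j = ∑_{k=0}^i th_{j-i+2k}` for `i ≥ 0`;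
`th_i th_j = -(th_{tau i} th_j)` for `i < -1` (note `tau i ≥ 0` there). -/
noncomputable def thMulB (i j : ℤ) : ℤ →₀ ℤ :=
  if i = -1 then 0
  else if 0 ≤ i then
    ∑ k ∈ Finset.range (i.toNat + 1), Finsupp.single (j - i + 2 * (k : ℤ)) (1 : ℤ)
  else
    -(∑ k ∈ Finset.range ((tau i).toNat + 1),
        Finsupp.single (j - tau i + 2 * (k : ℤ)) (1 : ℤ))

/-- The bilinear extension of `thMulB` to all of `tCH2`. -/
noncomputable def tmul (x y : ℤ →₀ ℤ) : ℤ →₀ ℤ :=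
  x.sum fun i a => y.sum fun j b => (a * b) • thMulB i j

/-- Basis element `h_i` of the free ℤ-module `CH2 = ℕ →₀ ℤ`. -/
noncomputable def hb (i : ℕ) : ℕ →₀ ℤ := Finsupp.single i 1

/-- Product of basis elements of `CH2`: `h_i h_j = ∑_{k=0}^{min i j} h_{|j-i|+2k}`. -/
noncomputable def hMulB (i j : ℕ) : ℕ →₀ ℤ :=
  ∑ k ∈ Finset.range (min i j + 1), Finsupp.single (max i j - min i j + 2 * k) (1 : ℤ)

/-- The bilinear extension of `hMulB` to all of `CH2`. -/
noncomputable def hmul (x y : ℕ →₀ ℤ) : ℕ →₀ ℤ :=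
  x.sum fun i a => y.sum fun j b => (a * b) • hMulB i j

/-- The linear map `L : tCH2 → CH2`, `th_i ↦ sgn(i+1) • h_{tau i}`. -/
noncomputable def Lmap (x : ℤ →₀ ℤ) : ℕ →₀ ℤ :=
  x.sum fun i a => (a * (i + 1).sign) • Finsupp.single (tau i).toNat (1 : ℤ)

noncomputable def Bfun (n : ℕ) (j : ℤ) : ℤ →₀ ℤ :=
  ∑ k ∈ Finset.range (n + 1), Finsupp.single (j - (n : ℤ) + 2 * (k : ℤ)) (1 : ℤ)

lemma thMulB_eq (i j : ℤ) : thMulB i j = (i + 1).sign • Bfun (tau i).toNat j := by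
  unfold thMulB Bfun
  rcases lt_trichotomy i (-1) with hi | hi | hi
  · rw [if_neg (by omega), if_neg (by omega)]
    have hs : (i + 1).sign = -1 := Int.sign_eq_neg_one_iff_neg.mpr (by omega)
    have htau : tau i = -i - 2 := by unfold tau; rw [abs_of_neg (by omega)]; ring
    have ht : ((tau i).toNat : ℤ) = tau i := Int.toNat_of_nonneg (by omega)
    rw [hs, ht, neg_smul, one_smul]
  · subst hi; simp
  · rw [if_neg (by omega), if_pos (by omega)]
    have hs : (i + 1).sign = 1 := Int.sign_eq_one_iff_pos.mpr (by omega)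
    have htau : tau i = i := by unfold tau; rw [abs_of_nonneg (by omega)]; ring
    have ht : ((tau i).toNat : ℤ) = i := by rw [Int.toNat_of_nonneg (by omega), htau]
    have ht2 : (tau i).toNat = i.toNat := by omega
    rw [hs, one_smul, ht, ht2]

theorem ker_annihilates (g1 g2 : ℤ →₀ ℤ) (h : Lmap g1 = 0) : tmul g1 g2 = 0 := by
  have key : ∀ j : ℤ,
      (g1.sum fun i a => (a * (i + 1).sign) • Bfun (tau i).toNat j) = 0 := by
    intro j
    set T : (ℕ →₀ ℤ) →ₗ[ℤ] (ℤ →₀ ℤ) :=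
      Finsupp.lsum ℤ (fun n => LinearMap.toSpanSingleton ℤ (ℤ →₀ ℤ) (Bfun n j)) with hT
    have hTs : ∀ (n : ℕ) (c : ℤ), T (Finsupp.single n c) = c • Bfun n j := by
      intro n c
      simp [hT, LinearMap.toSpanSingleton_apply]
    have hmain : T (Lmap g1)
        = g1.sum fun i a => (a * (i + 1).sign) • Bfun (tau i).toNat j := by
      unfold Lmap
      rw [map_finsuppSum]
      refine Finsupp.sum_congr fun i _ => ?_
      rw [map_smul, hTs, one_smul]
    rw [← hmain, h, map_zero]
  unfold tmul
  rw [Finsupp.sum_comm]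
  refine Finset.sum_eq_zero fun j _ => ?_
  show (g1.sum fun i a => (a * g2 j) • thMulB i j) = 0
  have : (g1.sum fun i a => (g2 j) • ((a * (i + 1).sign) • Bfun (tau i).toNat j))
      = g1.sum fun i a => (a * g2 j) • thMulB i j := by
    refine Finsupp.sum_congr fun i _ => ?_
    rw [thMulB_eq, smul_smul, smul_smul]
    ring_nf
  rw [← this, ← Finsupp.smul_sum, key, smul_zero]
end

section
/- In tCH2, with U(a,b,c) = sgn(a) * sum_{j=0}^{|a|-1} th_{c-b-|a|+2j} (and U(0,b,c)=0), for all integers a, b, c: (th_{b+a} + th_{b-a}) * th_{c-1} - th_b * th_{a+c-1} = U(b+1, a, c). -/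
/-- `U(a,b,c) = sgn(a) • ∑_{j=0}^{|a|-1} th_{c-b-|a|+2j}` (so `U(0,b,c) = 0`). -/
noncomputable def U (a b c : ℤ) : ℤ →₀ ℤ :=
  a.sign • ∑ j ∈ Finset.range a.natAbs, Finsupp.single (c - b - |a| + 2 * (j : ℤ)) (1 : ℤ)

lemma sum_single_apply (N : ℕ) (m s : ℤ) :
    (∑ k ∈ Finset.range N, Finsupp.single (m + 2*(k:ℤ)) (1:ℤ)) s
      = if (s - m) % 2 = 0 ∧ m ≤ s ∧ s < m + 2*N then 1 else 0 := by
  induction N with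
  | zero =>
    rw [Finset.range_zero, Finset.sum_empty]
    simp only [Finsupp.coe_zero, Pi.zero_apply]
    split_ifs with h <;> omega
  | succ n ih =>
    rw [Finset.sum_range_succ]
    simp only [Finsupp.add_apply, ih, Finsupp.single_apply]
    push_cast
    split_ifs <;> omega

lemma tmul_single (i j : ℤ) : tmul (th i) (th j) = thMulB i j := by
  unfold tmul th
  rw [Finsupp.sum_single_index (by simp), Finsupp.sum_single_index (by simp)]
  rw [one_mul, one_smul]

lemma thMulB_apply (i j s : ℤ) : (thMulB i j) s =
    (if (s - j - i) % 2 = 0 then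
      ((if s - j - 1 < i + 1 then 1 else 0) - (if s - j - 1 < -(i+1) then (1:ℤ) else 0))
    else 0) := by
  unfold thMulB
  by_cases h1 : i = -1
  · subst h1
    rw [if_pos rfl]
    simp only [Finsupp.coe_zero, Pi.zero_apply]
    split_ifs <;> omega
  by_cases h2 : 0 ≤ i
  · rw [if_neg h1, if_pos h2, sum_single_apply]
    push_cast
    split_ifs <;> omega
  · have ht : tau i = -i - 2 := by
      simp only [tau]; rw [abs_of_nonpos (by omega)]; ring
    rw [if_neg h1, if_neg h2, ht, Finsupp.neg_apply, sum_single_apply]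
    push_cast
    split_ifs <;> omega

lemma U_apply (a b c s : ℤ) : (U a b c) s =
    (if (s - c + b + a) % 2 = 0 then
      ((if s - (c - b) < a then 1 else 0) - (if s - (c - b) < -a then (1:ℤ) else 0))
    else 0) := by
  unfold U
  rw [Finsupp.smul_apply, sum_single_apply, smul_eq_mul]
  rcases lt_trichotomy a 0 with h | h | h
  · rw [Int.sign_eq_neg_one_of_neg h, abs_of_neg h]
    push_cast
    rw [abs_of_neg h]
    split_ifs <;> omega
  · subst h
    simp only [Int.sign_zero, zero_mul]
    split_ifs <;> omega
  · rw [Int.sign_eq_one_of_pos h, abs_of_pos h]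
    push_cast
    rw [abs_of_pos h]
    split_ifs <;> omega

lemma tmul_th_right (x : ℤ →₀ ℤ) (j : ℤ) :
    tmul x (th j) = x.sum fun i a => a • thMulB i j := by
  unfold tmul th
  congr 1; funext i a
  rw [Finsupp.sum_single_index (by simp), mul_one]

lemma tmul_add_th (x y : ℤ →₀ ℤ) (j : ℤ) :
    tmul (x + y) (th j) = tmul x (th j) + tmul y (th j) := by
  rw [tmul_th_right, tmul_th_right, tmul_th_right]
  exact Finsupp.sum_add_index' (fun i => zero_smul _ _) (fun i b₁ b₂ => add_smul _ _ _)

set_option maxHeartbeats 4000000 in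
theorem th_mul_U' (a b c : ℤ) :
    tmul (th (b + a) + th (b - a)) (th (c - 1)) - tmul (th b) (th (a + c - 1)) =
      U (b + 1) a c := by
  rw [tmul_add_th, tmul_single, tmul_single, tmul_single]
  ext s
  simp only [Finsupp.sub_apply, Finsupp.add_apply, thMulB_apply, U_apply]
  split_ifs <;> omega
end
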